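/- Let M and N be 2-parameter rectangle persistence modules with underlying open rectangles R_M = (a₁,b₁)×(a₂,b₂) and R_N = (c₁,d₁)×(c₂,d₂). Then there exists a non-trivial (nonzero) morphism f: M → N if and only if c ≤ a < d ≤ b, where a=(a₁,a₂), b=(b₁,b₂), c=(c₁,c₂), d=(d₁,d₂), ≤ is the coordinatewise order and < is the strict coordinatewise order. -/

import Mathlib

open Classical

noncomputable section

/-- A point of the parameter space `ℝⁿ`. -/
abbrev Pt (n : ℕ) := Fin n → ℝ

/-- Shift of a point by the diagonal vector `(ε, …, ε)`. -/
def shiftPt {n : ℕ} (u : Pt n) (ε : ℝ) : Pt n := fun i => u i + ε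

lemma shiftPt_mono {n : ℕ} {u v : Pt n} (ε : ℝ) (h : u ≤ v) :
    shiftPt u ε ≤ shiftPt v ε := fun i => add_le_add (h i) (le_refl ε)

lemma le_shiftPt {n : ℕ} (u : Pt n) {ε : ℝ} (hε : 0 ≤ ε) : u ≤ shiftPt u ε :=
  fun i => le_add_of_nonneg_right hε

/-- An `n`-parameter persistence module over the field `k`. -/
structure PersMod (k : Type) [Field k] (n : ℕ) where
  obj : Pt n → Type
  [acg : ∀ u, AddCommGroup (obj u)]
  [mod : ∀ u, Module k (obj u)]
  map : ∀ {u v : Pt n}, u ≤ v → (obj u →ₗ[k] obj v)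
  map_id : ∀ u : Pt n, map (le_refl u) = LinearMap.id
  map_comp : ∀ {u v w : Pt n} (h1 : u ≤ v) (h2 : v ≤ w),
    (map h2).comp (map h1) = map (h1.trans h2)

attribute [instance] PersMod.acg PersMod.mod

variable {k : Type} [Field k] {n : ℕ}

/-- A morphism of persistence modules. -/
structure PersHom (M N : PersMod k n) where
  app : ∀ u, M.obj u →ₗ[k] N.obj u
  natural : ∀ {u v : Pt n} (h : u ≤ v),
    (app v).comp (M.map h) = (N.map h).comp (app u)

/-- A morphism is trivial when every component is the zero map. -/
def PersHom.Trivial {M N : PersMod k n} (f : PersHom M N) : Prop := ∀ u, f.app u = 0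

/-- The `ε`-shift of a persistence module. -/
def PersMod.shift (M : PersMod k n) (ε : ℝ) : PersMod k n where
  obj u := M.obj (shiftPt u ε)
  map h := M.map (shiftPt_mono ε h)
  map_id u := M.map_id _
  map_comp h1 h2 := M.map_comp _ _

/-- `(f, g)` is an `ε`-interleaving pair between `M` and `N`. -/
def IsInterleavingPair (M N : PersMod k n) (ε : ℝ) (hε : 0 ≤ ε)
    (f : PersHom M (N.shift ε)) (g : PersHom N (M.shift ε)) : Prop :=
  (∀ u : Pt n, (g.app (shiftPt u ε)).comp (f.app u) =
      M.map ((le_shiftPt u hε).trans (le_shiftPt _ hε))) ∧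
  (∀ u : Pt n, (f.app (shiftPt u ε)).comp (g.app u) =
      N.map ((le_shiftPt u hε).trans (le_shiftPt _ hε)))

/-- `M` and `N` are `ε`-interleaved. -/
def Interleaved (M N : PersMod k n) (ε : ℝ) : Prop :=
  ∃ (hε : 0 ≤ ε) (f : PersHom M (N.shift ε)) (g : PersHom N (M.shift ε)),
    IsInterleavingPair M N ε hε f g

/-- The interleaving distance, with value in the extended reals. -/
def interleavingDist (M N : PersMod k n) : EReal :=
  sInf {x : EReal | ∃ ε : ℝ, Interleaved M N ε ∧ x = (ε : EReal)}

/-- `M` is `ε`-trivial : all transition maps `M_u → M_{u+(ε,…,ε)}` vanish. -/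
def EpsTrivial (M : PersMod k n) (ε : ℝ) : Prop :=
  ∀ (u : Pt n) (h : u ≤ shiftPt u ε), M.map h = 0

/-- The zero persistence module. -/
def ZeroMod (k : Type) [Field k] (n : ℕ) : PersMod k n where
  obj _ := PUnit
  map _ := 0
  map_id _ := by apply LinearMap.ext; intro x; exact Subsingleton.elim _ _
  map_comp _ _ := by apply LinearMap.ext; intro x; exact Subsingleton.elim _ _

/-- The space at `u` of the interval module on `I` : all of `k` if `u ∈ I`, `0` otherwise. -/
def segSpace (k : Type) [Field k] {n : ℕ} (I : Set (Pt n)) (u : Pt n) : Submodule k k where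
  carrier := {x | u ∉ I → x = 0}
  add_mem' := by intro x y hx hy h; simp only [Set.mem_setOf_eq] at *; rw [hx h, hy h, add_zero]
  zero_mem' := fun _ => rfl
  smul_mem' := by intro c x hx h; simp only [Set.mem_setOf_eq] at *; rw [hx h, smul_zero]

/-- The interval persistence module on an order-convex set `I` : `k` on `I` with identity
internal transition maps, `0` elsewhere. -/
def IntervalMod (k : Type) [Field k] {n : ℕ} (I : Set (Pt n)) (hI : I.OrdConnected) :
    PersMod k n where
  obj u := segSpace k I u
  map {u v} h :=
    { toFun := fun x => ⟨if v ∈ I then (x : k) else 0, by intro hv; simp [hv]⟩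
      map_add' := by intro x y; apply Subtype.ext; by_cases hv : v ∈ I <;> simp [hv]
      map_smul' := by intro c x; apply Subtype.ext; by_cases hv : v ∈ I <;> simp [hv] }
  map_id u := by
    apply LinearMap.ext; intro x
    apply Subtype.ext
    by_cases hu : u ∈ I
    · simp [hu]
    · simp [hu, x.2 hu]
  map_comp {u v w} h1 h2 := by
    apply LinearMap.ext; intro x
    apply Subtype.ext
    by_cases hw : w ∈ I
    · by_cases hv : v ∈ I
      · simp [hw, hv]
      · by_cases hu : u ∈ I
        · exact absurd (hI.out hu hw ⟨h1, h2⟩) hv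
        · simp [hw, hv, x.2 hu]
    · simp [hw]

/-- The open box `∏ᵢ (aᵢ, bᵢ)` with extended-real endpoints. -/
def box {n : ℕ} (a b : Fin n → EReal) : Set (Pt n) :=
  {u | ∀ i, a i < (u i : EReal) ∧ (u i : EReal) < b i}

lemma box_ordConnected {n : ℕ} (a b : Fin n → EReal) : (box a b).OrdConnected := by
  constructor
  intro u hu w hw v hv i
  exact ⟨lt_of_lt_of_le (hu i).1 (by exact_mod_cast hv.1 i),
    lt_of_le_of_lt (by exact_mod_cast hv.2 i) (hw i).2⟩

/-- The rectangle persistence module with underlying open rectangle `∏ᵢ (aᵢ, bᵢ)`. -/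
def RectMod (k : Type) [Field k] {n : ℕ} (a b : Fin n → EReal) : PersMod k n :=
  IntervalMod k (box a b) (box_ordConnected a b)

/-- Subtraction of extended reals with the conventions `(±∞) − (±∞) = 0`. -/
def esub (x y : EReal) : EReal :=
  if (x = ⊤ ∧ y = ⊤) ∨ (x = ⊥ ∧ y = ⊥) then 0 else x - y

/-- Absolute value on the extended reals (`|±∞| = +∞`). -/
def eabs (x : EReal) : EReal := max x (-x)

/-- The `ℓ^∞`-distance `‖x − y‖_∞` on extended `ℝⁿ`. -/
def supDist {n : ℕ} (x y : Fin n → EReal) : EReal := ⨆ i, eabs (esub (x i) (y i))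

/-- The closed formula for the interleaving distance between the rectangle modules with
rectangles `∏ (aᵢ, bᵢ)` and `∏ (cᵢ, dᵢ)`. -/
def dIFormula {n : ℕ} (a b c d : Fin n → EReal) : EReal :=
  min (max (⨅ i, esub (b i) (a i) / 2) (⨅ i, esub (d i) (c i) / 2))
      (max (supDist c a) (supDist d b))

/-- `M` and `N` are isomorphic persistence modules. -/
def PersIso (M N : PersMod k n) : Prop :=
  ∃ f : PersHom M N, ∀ u, Function.Bijective (f.app u)

/-- `M` is a non-zero persistence module. -/
def PersMod.Nonzero (M : PersMod k n) : Prop := ∃ (u : Pt n) (x : M.obj u), x ≠ 0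

/-- Direct sum of two persistence modules. -/
def dirSum (M N : PersMod k n) : PersMod k n where
  obj u := M.obj u × N.obj u
  map h := (M.map h).prodMap (N.map h)
  map_id u := by
    apply LinearMap.ext; intro x
    show ((M.map (le_refl u)) x.1, (N.map (le_refl u)) x.2) = x
    rw [M.map_id, N.map_id]; rfl
  map_comp h1 h2 := by
    apply LinearMap.ext; intro x
    show ((M.map _) ((M.map _) x.1), (N.map _) ((N.map _) x.2))
      = ((M.map _) x.1, (N.map _) x.2)
    have hM : (M.map h2) ((M.map h1) x.1) = (M.map (h1.trans h2)) x.1 := by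
      rw [← M.map_comp h1 h2]; rfl
    have hN : (N.map h2) ((N.map h1) x.2) = (N.map (h1.trans h2)) x.2 := by
      rw [← N.map_comp h1 h2]; rfl
    rw [hM, hN]

/-- Zigzag-connectedness of a subset of `ℝⁿ`. -/
def ZigzagConnected {n : ℕ} (I : Set (Pt n)) : Prop :=
  ∀ u ∈ I, ∀ v ∈ I,
    Relation.ReflTransGen (fun x y => x ∈ I ∧ y ∈ I ∧ (x ≤ y ∨ y ≤ x)) u v

/-- `I` is an interval in `ℝⁿ`: nonempty, order-convex and zigzag-connected. -/
def IsInterval {n : ℕ} (I : Set (Pt n)) : Prop :=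
  I.Nonempty ∧ I.OrdConnected ∧ ZigzagConnected I

/-- A partial multibijection `Fin m ⇸ Fin k'`, encoded by an `Option`-valued map that is
injective on matched indices. -/
def PartialInj {m k' : ℕ} (σ : Fin m → Option (Fin k')) : Prop :=
  ∀ i j l, σ i = some l → σ j = some l → i = j

/-- `σ` is an `ε`-matching between the barcodes `A` and `B` (families of intervals). -/
def IsEpsMatching (k : Type) [Field k] {n m k' : ℕ}
    (A : Fin m → Set (Pt n)) (hA : ∀ i, (A i).OrdConnected)
    (B : Fin k' → Set (Pt n)) (hB : ∀ j, (B j).OrdConnected)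
    (σ : Fin m → Option (Fin k')) (ε : ℝ) : Prop :=
  PartialInj σ ∧
  (∀ i, σ i = none → EpsTrivial (IntervalMod k (A i) (hA i)) (2 * ε)) ∧
  (∀ j, (∀ i, σ i ≠ some j) → EpsTrivial (IntervalMod k (B j) (hB j)) (2 * ε)) ∧
  (∀ i j, σ i = some j →
    Interleaved (IntervalMod k (A i) (hA i)) (IntervalMod k (B j) (hB j)) ε)

/-- The bottleneck distance between the interval decomposable modules with barcodes
`A` and `B`. -/
def bottleneckDist (k : Type) [Field k] {n m k' : ℕ}
    (A : Fin m → Set (Pt n)) (hA : ∀ i, (A i).OrdConnected)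
    (B : Fin k' → Set (Pt n)) (hB : ∀ j, (B j).OrdConnected) : EReal :=
  sInf {x : EReal | ∃ (ε : ℝ) (σ : Fin m → Option (Fin k')),
    0 ≤ ε ∧ IsEpsMatching k A hA B hB σ ε ∧ x = (ε : EReal)}

/-! A morphism `k_I → k_J` of interval modules vanishes outside `I ∩ J`, and if it is
nonzero at `u` then every point of `I` below `u` lies in `J` and every point of `J` above `u`
lies in `I`: such a point is joined to `u` by an isomorphism of the source (of the target), so
naturality would otherwise kill the component at `u`. For open rectangles these two closure
properties amount to `c ≤ a` and `d ≤ b`; conversely, under them the identity of `k` on the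
overlap is natural, and the overlap is nonempty exactly when `a < d`. -/

namespace PersHom

variable {M N : PersMod k n} (f : PersHom M N)

lemma app_eq_zero_of_le_of_surjective {w u : Pt n} (h : w ≤ u)
    (hM : Function.Surjective (M.map h)) (hw : f.app w = 0) : f.app u = 0 := by
  ext y
  obtain ⟨x, rfl⟩ := hM y
  simpa [hw] using LinearMap.congr_fun (f.natural h) x

lemma app_eq_zero_of_le_of_injective {u v : Pt n} (h : u ≤ v)
    (hN : Function.Injective (N.map h)) (hv : f.app v = 0) : f.app u = 0 := by
  ext x
  apply hN
  simpa [hv] using (LinearMap.congr_fun (f.natural h) x).symm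

end PersHom

namespace IntervalMod

variable {I J : Set (Pt n)} {hI : I.OrdConnected} {hJ : J.OrdConnected}

lemma subsingleton_obj {u : Pt n} (hu : u ∉ I) :
    Subsingleton ((IntervalMod k I hI).obj u) :=
  ⟨fun x y => Subtype.ext ((x.2 hu).trans (y.2 hu).symm)⟩

lemma map_val {u v : Pt n} (h : u ≤ v) (x : (IntervalMod k I hI).obj u) :
    ((IntervalMod k I hI).map h x).1 = if v ∈ I then x.1 else 0 := rfl

lemma map_bijective {u v : Pt n} (h : u ≤ v) (hu : u ∈ I) (hv : v ∈ I) :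
    Function.Bijective ((IntervalMod k I hI).map h) := by
  refine ⟨fun x y hxy => Subtype.ext ?_, fun y => ⟨⟨y.1, fun h => absurd hu h⟩, ?_⟩⟩
  · simpa [map_val, hv] using congrArg Subtype.val hxy
  · exact Subtype.ext (if_pos hv)

section Hom

variable (hIJ : ∀ ⦃u v⦄, u ≤ v → u ∈ I → v ∈ J → u ∈ J ∧ v ∈ I)

def hom : PersHom (IntervalMod k I hI) (IntervalMod k J hJ) where
  app u := ({
    toFun := fun x => ⟨if u ∈ J then x.1 else 0, fun hu => if_neg hu⟩
    map_add' := fun x y => Subtype.ext (by by_cases hu : u ∈ J <;> simp [hu])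
    map_smul' := fun c x => Subtype.ext (by by_cases hu : u ∈ J <;> simp [hu]) } :
      segSpace k I u →ₗ[k] segSpace k J u)
  natural {u v} h := by
    ext x
    refine Subtype.ext ?_
    change (if v ∈ J then (if v ∈ I then x.1 else 0) else 0)
      = if v ∈ J then (if u ∈ J then x.1 else 0) else 0
    by_cases hv : v ∈ J
    · by_cases hu : u ∈ I
      · simp [hv, hIJ h hu hv]
      · simp [x.2 hu]
    · simp [hv]

lemma hom_app_ne_zero {u : Pt n} (huI : u ∈ I) (huJ : u ∈ J) :
    (hom (k := k) (hI := hI) (hJ := hJ) hIJ).app u ≠ 0 := by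
  intro h
  have := congrArg Subtype.val (LinearMap.congr_fun h ⟨1, fun h => absurd huI h⟩)
  change (if u ∈ J then (1 : k) else 0) = 0 at this
  exact one_ne_zero ((if_pos huJ).symm.trans this)

end Hom

variable (f : PersHom (IntervalMod k I hI) (IntervalMod k J hJ)) {u : Pt n}

lemma app_eq_zero_of_notMem_left (hu : u ∉ I) : f.app u = 0 :=
  have := subsingleton_obj (k := k) (hI := hI) hu
  Subsingleton.elim _ _

lemma app_eq_zero_of_notMem_right (hu : u ∉ J) : f.app u = 0 :=
  have := subsingleton_obj (k := k) (hI := hJ) hu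
  Subsingleton.elim _ _

lemma mem_of_app_ne_zero (hf : f.app u ≠ 0) : u ∈ I ∧ u ∈ J :=
  ⟨by_contra fun hu => hf (app_eq_zero_of_notMem_left f hu),
    by_contra fun hu => hf (app_eq_zero_of_notMem_right f hu)⟩

lemma mem_of_le_of_app_ne_zero (hf : f.app u ≠ 0) {w : Pt n} (h : w ≤ u) (hw : w ∈ I) :
    w ∈ J :=
  by_contra fun hwJ => hf <| f.app_eq_zero_of_le_of_surjective h
    (map_bijective h hw (mem_of_app_ne_zero f hf).1).2 (app_eq_zero_of_notMem_right f hwJ)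

lemma mem_of_ge_of_app_ne_zero (hf : f.app u ≠ 0) {v : Pt n} (h : u ≤ v) (hv : v ∈ J) :
    v ∈ I :=
  by_contra fun hvI => hf <| f.app_eq_zero_of_le_of_injective h
    (map_bijective h (mem_of_app_ne_zero f hf).2 hv).1 (app_eq_zero_of_notMem_left f hvI)

end IntervalMod

section Box

variable {a b c d : Fin n → EReal} {u : Pt n}

lemma update_mem_box (hu : u ∈ box a b) {i : Fin n} {t : ℝ} :
    Function.update u i t ∈ box a b ↔ a i < t ∧ (t : EReal) < b i := by
  refine ⟨fun h => by simpa using h i, fun ht j => ?_⟩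
  rcases eq_or_ne j i with rfl | hj
  · simpa using ht
  · simpa [hj] using hu j

lemma le_of_forall_le_mem_box (huA : u ∈ box a b) (huC : u ∈ box c d)
    (H : ∀ w ≤ u, w ∈ box a b → w ∈ box c d) (i : Fin n) : c i ≤ a i := by
  by_contra! hac
  obtain ⟨t, hat, htc⟩ := EReal.exists_between_coe_real hac
  have htu : (t : EReal) < u i := htc.trans (huC i).1
  have hw := H (Function.update u i t) (update_le_self_iff.2 (EReal.coe_lt_coe_iff.1 htu).le)
    ((update_mem_box huA).2 ⟨hat, htu.trans (huA i).2⟩)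
  exact htc.not_gt ((update_mem_box huC).1 hw).1

lemma le_of_forall_ge_mem_box (huA : u ∈ box a b) (huC : u ∈ box c d)
    (H : ∀ v, u ≤ v → v ∈ box c d → v ∈ box a b) (i : Fin n) : d i ≤ b i := by
  by_contra! hbd
  obtain ⟨t, hbt, htd⟩ := EReal.exists_between_coe_real hbd
  have hut : (u i : EReal) < t := (huA i).2.trans hbt
  have hv := H (Function.update u i t) (le_update_self_iff.2 (EReal.coe_lt_coe_iff.1 hut).le)
    ((update_mem_box huC).2 ⟨(huC i).1.trans hut, htd⟩)
  exact hbt.not_gt ((update_mem_box huA).1 hv).2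

lemma mem_box_of_le (hca : ∀ i, c i ≤ a i) (hdb : ∀ i, d i ≤ b i) {u v : Pt n} (h : u ≤ v)
    (hu : u ∈ box a b) (hv : v ∈ box c d) : u ∈ box c d ∧ v ∈ box a b :=
  ⟨fun i => ⟨(hca i).trans_lt (hu i).1, (EReal.coe_le_coe_iff.2 (h i)).trans_lt (hv i).2⟩,
    fun i => ⟨(hu i).1.trans_le (EReal.coe_le_coe_iff.2 (h i)), (hv i).2.trans_le (hdb i)⟩⟩

end Box

theorem exists_nontrivial_morphism_iff_general (a b c d : Fin 2 → EReal) :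
    (∃ f : PersHom (RectMod k a b) (RectMod k c d), ¬ f.Trivial) ↔
      ((∀ i, c i ≤ a i) ∧ (∀ i, a i < d i) ∧ (∀ i, d i ≤ b i)) := by
  constructor
  · rintro ⟨f, hf⟩
    obtain ⟨u, hfu⟩ := not_forall.1 hf
    obtain ⟨huA, huC⟩ := IntervalMod.mem_of_app_ne_zero f hfu
    exact ⟨le_of_forall_le_mem_box huA huC fun w => IntervalMod.mem_of_le_of_app_ne_zero f hfu,
      fun i => (huA i).1.trans (huC i).2,
      le_of_forall_ge_mem_box huA huC fun v => IntervalMod.mem_of_ge_of_app_ne_zero f hfu⟩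
  · rintro ⟨hca, had, hdb⟩
    choose t hat htd using fun i => EReal.exists_between_coe_real (had i)
    refine ⟨IntervalMod.hom fun u v => mem_box_of_le hca hdb, fun h => ?_⟩
    exact IntervalMod.hom_app_ne_zero _ (u := t) (fun i => ⟨hat i, (htd i).trans_le (hdb i)⟩)
      (fun i => ⟨(hca i).trans_lt (hat i), htd i⟩) (h t)

theorem exists_nontrivial_morphism_iff (a b c d : Fin 2 → EReal)
    (ha : ∀ i, a i ≠ ⊤) (hb : ∀ i, b i ≠ ⊥)
    (hc : ∀ i, c i ≠ ⊤) (hd : ∀ i, d i ≠ ⊥) (hab : ∀ i, a i < b i) (hcd : ∀ i, c i < d i) :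
    (∃ f : PersHom (RectMod k a b) (RectMod k c d), ¬ f.Trivial) ↔
      ((∀ i, c i ≤ a i) ∧ (∀ i, a i < d i) ∧ (∀ i, d i ≤ b i)) :=
  exists_nontrivial_morphism_iff_general a b c d
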